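/- For every integer n ≥ 2 and every natural number N, there is no bi-Lipschitz map from (X_n, d_n) into Euclidean space ℝ^N; that is, there is no map φ : X_n → ℝ^N and constant K > 0 such that (1/K)·d_n(S, S') ≤ ‖φ(S) − φ(S')‖ ≤ K·d_n(S, S') for all S, S' ∈ X_n. -/

import Mathlib

open Filter
open scoped ENNReal

noncomputable section

namespace GraphTrees

/-- The word length of an element of a free group: the length of its reduced word. -/
def wlen {n : ℕ} (g : FreeGroup (Fin n)) : ℕ := (FreeGroup.toWord g).length

/-- `h` is a prefix of `g`. -/
def IsPref {n : ℕ} (h g : FreeGroup (Fin n)) : Prop :=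
  wlen h + wlen (h⁻¹ * g) = wlen g

/-- Vertex sets of infinite connected subtrees of the Cayley graph of the free group on
`n` generators which contain the identity: subsets containing `1`, infinite, and
prefix-closed. -/
def IsTree {n : ℕ} (S : Set (FreeGroup (Fin n))) : Prop :=
  1 ∈ S ∧ S.Infinite ∧ ∀ g ∈ S, ∀ h : FreeGroup (Fin n), IsPref h g → h ∈ S

/-- The space `X n` of pointed trees. -/
def X (n : ℕ) : Type := {S : Set (FreeGroup (Fin n)) // IsTree S}

variable {n : ℕ}

/-- The pattern `B_S(m)` of radius `m` of a pointed tree. -/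
def ball (S : X n) (m : ℕ) : Set (FreeGroup (Fin n)) := {g ∈ S.1 | wlen g ≤ m}

/-- The set of radii on which two pointed trees have the same pattern. -/
def agreeSet (S S' : X n) : Set ℕ := {m | ball S m = ball S' m}

/-- The ball metric on the space of pointed trees. -/
def tdist (S S' : X n) : ℝ :=
  letI := Classical.propDecidable (S = S')
  if S = S' then 0 else Real.exp (-((sSup (agreeSet S S') : ℕ) : ℝ))

theorem tdist_eq_of_ne {x y : X n} (h : x ≠ y) :
    tdist x y = Real.exp (-((sSup (agreeSet x y) : ℕ) : ℝ)) := by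
  unfold tdist
  rw [if_neg h]

theorem ball_mono_eq {x y : X n} {k m : ℕ} (hkm : k ≤ m)
    (h : ball x m = ball y m) : ball x k = ball y k := by
  ext g
  constructor
  · rintro ⟨hg, hlen⟩
    have hx : g ∈ ball x m := ⟨hg, hlen.trans hkm⟩
    rw [h] at hx
    exact ⟨hx.1, hlen⟩
  · rintro ⟨hg, hlen⟩
    have hy : g ∈ ball y m := ⟨hg, hlen.trans hkm⟩
    rw [← h] at hy
    exact ⟨hy.1, hlen⟩

theorem eq_of_agree_all {x y : X n} (h : ∀ m, ball x m = ball y m) : x = y := by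
  apply Subtype.ext
  ext g
  constructor
  · intro hg
    have hx : g ∈ ball x (wlen g) := ⟨hg, le_rfl⟩
    rw [h] at hx
    exact hx.1
  · intro hg
    have hy : g ∈ ball y (wlen g) := ⟨hg, le_rfl⟩
    rw [← h] at hy
    exact hy.1

theorem bddAbove_agreeSet {x y : X n} (h : x ≠ y) : BddAbove (agreeSet x y) := by
  by_contra hb
  refine h (eq_of_agree_all fun m => ?_)
  rcases not_bddAbove_iff.mp hb m with ⟨k, hk, hmk⟩
  exact ball_mono_eq hmk.le hk

theorem ball_zero (x : X n) : ball x 0 = {1} := by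
  ext g
  simp only [ball, Set.mem_setOf_eq, Nat.le_zero, Set.mem_singleton_iff]
  constructor
  · rintro ⟨hg, hlen⟩
    exact FreeGroup.toWord_eq_nil_iff.mp (List.length_eq_zero_iff.mp hlen)
  · rintro rfl
    exact ⟨x.2.1, by simp [wlen]⟩

theorem zero_mem_agreeSet (x y : X n) : (0 : ℕ) ∈ agreeSet x y := by
  show ball x 0 = ball y 0
  rw [ball_zero, ball_zero]

theorem tdist_nonneg (x y : X n) : 0 ≤ tdist x y := by
  rcases eq_or_ne x y with rfl | h
  · unfold tdist
    rw [if_pos rfl]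
  · rw [tdist_eq_of_ne h]
    exact (Real.exp_pos _).le

theorem tdist_self (x : X n) : tdist x x = 0 := by
  unfold tdist
  rw [if_pos rfl]

theorem tdist_comm (x y : X n) : tdist x y = tdist y x := by
  by_cases h : x = y
  · subst h; rfl
  · have hs : agreeSet x y = agreeSet y x := by
      ext m
      exact eq_comm
    rw [tdist_eq_of_ne h, tdist_eq_of_ne (Ne.symm h), hs]

theorem tdist_ultra (x y z : X n) : tdist x z ≤ max (tdist x y) (tdist y z) := by
  rcases eq_or_ne x z with rfl | hxz
  · exact le_max_of_le_left (by rw [tdist_self]; exact tdist_nonneg x y)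
  rcases eq_or_ne x y with rfl | hxy
  · exact le_max_of_le_right le_rfl
  rcases eq_or_ne y z with rfl | hyz
  · exact le_max_of_le_left le_rfl
  have hbxy := bddAbove_agreeSet hxy
  have hbyz := bddAbove_agreeSet hyz
  have hbxz := bddAbove_agreeSet hxz
  have hma : sSup (agreeSet x y) ∈ agreeSet x y :=
    Nat.sSup_mem ⟨0, zero_mem_agreeSet x y⟩ hbxy
  have hmb : sSup (agreeSet y z) ∈ agreeSet y z :=
    Nat.sSup_mem ⟨0, zero_mem_agreeSet y z⟩ hbyz
  have hmin : min (sSup (agreeSet x y)) (sSup (agreeSet y z)) ∈ agreeSet x z := by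
    have h1 : ball x (min (sSup (agreeSet x y)) (sSup (agreeSet y z)))
        = ball y (min (sSup (agreeSet x y)) (sSup (agreeSet y z))) :=
      ball_mono_eq (min_le_left _ _) hma
    have h2 : ball y (min (sSup (agreeSet x y)) (sSup (agreeSet y z)))
        = ball z (min (sSup (agreeSet x y)) (sSup (agreeSet y z))) :=
      ball_mono_eq (min_le_right _ _) hmb
    exact h1.trans h2
  have hle : min (sSup (agreeSet x y)) (sSup (agreeSet y z)) ≤ sSup (agreeSet x z) :=
    le_csSup hbxz hmin
  rw [tdist_eq_of_ne hxz, tdist_eq_of_ne hxy, tdist_eq_of_ne hyz]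
  rcases le_total (sSup (agreeSet x y)) (sSup (agreeSet y z)) with hab | hab
  · refine le_max_of_le_left (Real.exp_le_exp.mpr ?_)
    have h2 : ((sSup (agreeSet x y) : ℕ) : ℝ) ≤ ((sSup (agreeSet x z) : ℕ) : ℝ) := by
      exact_mod_cast (min_eq_left hab) ▸ hle
    linarith
  · refine le_max_of_le_right (Real.exp_le_exp.mpr ?_)
    have h2 : ((sSup (agreeSet y z) : ℕ) : ℝ) ≤ ((sSup (agreeSet x z) : ℕ) : ℝ) := by
      exact_mod_cast (min_eq_right hab) ▸ hle
    linarith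

theorem tdist_triangle (x y z : X n) : tdist x z ≤ tdist x y + tdist y z :=
  (tdist_ultra x y z).trans
    (max_le (le_add_of_nonneg_right (tdist_nonneg y z))
      (le_add_of_nonneg_left (tdist_nonneg x y)))

instance : MetricSpace (X n) where
  dist := tdist
  dist_self := tdist_self
  dist_comm := tdist_comm
  dist_triangle := tdist_triangle
  eq_of_dist_eq_zero := by
    intro x y h
    by_contra hne
    have h' : tdist x y = 0 := h
    rw [tdist_eq_of_ne hne] at h'
    exact (Real.exp_pos _).ne' h'

theorem dist_eq_tdist (x y : X n) : dist x y = tdist x y := rfl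

/-- The translate `S · g` of a tree `S` by a vertex `g ∈ S`. -/
def translate {n : ℕ} (S : Set (FreeGroup (Fin n))) (g : FreeGroup (Fin n)) :
    Set (FreeGroup (Fin n)) := (fun h => g⁻¹ * h) '' S

/-- The orbit `O(S) = {S · g : g ∈ S}` of a pointed tree under the pseudogroup action. -/
def orbit (S : X n) : Set (X n) := {S' | ∃ g ∈ S.1, S'.1 = translate S.1 g}

/-- A subset `Y ⊆ X n` is invariant under the pseudogroup action. -/
def Invariant (Y : Set (X n)) : Prop :=
  ∀ S ∈ Y, ∀ g ∈ S.1, ∀ S' : X n, S'.1 = translate S.1 g → S' ∈ Y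

/-- `Λ(Z, m)`: the number of distinct patterns of radius `m` of trees in `Z`. -/
def Lam (Z : Set (X n)) (m : ℕ) : ℕ := ((fun S => ball S m) '' Z).ncard

/-- The lower box dimension of a subset of the space of pointed trees. -/
def lowerBox (Z : Set (X n)) : ℝ≥0∞ :=
  Filter.liminf (fun m : ℕ => ENNReal.ofReal (Real.log (Lam Z m)) / (m : ℝ≥0∞)) Filter.atTop

/-- The upper box dimension of a subset of the space of pointed trees. -/
def upperBox (Z : Set (X n)) : ℝ≥0∞ :=
  Filter.limsup (fun m : ℕ => ENNReal.ofReal (Real.log (Lam Z m)) / (m : ℝ≥0∞)) Filter.atTop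

end GraphTrees

/-!
For each `m`, the `m + 1` trees obtained from the ball of radius `m` by attaching the ray
`a^j b^∞` (`j ≤ m`) agree up to radius `m` and differ at radius `m + 1`, so they are pairwise at
distance exactly `e^{-m}`: the space contains equilateral sets of every size. Under a bi-Lipschitz
map into `ℝ^N`, such a set rescales to a `1/K`-separated subset of the ball of radius `K`, and by
total boundedness that ball holds only boundedly many such points.
-/

theorem TotallyBounded.exists_card_le_of_separated {α : Type*} [PseudoMetricSpace α]
    {s : Set α} (hs : TotallyBounded s) {δ : ℝ} (hδ : 0 < δ) :
    ∃ M : ℕ, ∀ (k : ℕ) (x : Fin k → α), (∀ i, x i ∈ s) →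
      (∀ i j, i ≠ j → δ ≤ dist (x i) (x j)) → k ≤ M := by
  obtain ⟨t, ht, hcover⟩ := Metric.totallyBounded_iff.mp hs (δ / 2) (by positivity)
  refine ⟨ht.toFinset.card, fun k x hxs hsep => ?_⟩
  have hnear : ∀ i, ∃ c ∈ t, dist (x i) c < δ / 2 := fun i => by
    simpa using hcover (hxs i)
  choose c hct hc using hnear
  have hinj : Function.Injective c := by
    intro i j hij
    by_contra hne
    have hcj := hc j
    rw [← hij] at hcj
    linarith [hsep i j hne, hc i, dist_triangle_right (x i) (x j) (c i)]
  simpa using Finset.card_le_card_of_injOn (s := Finset.univ) c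
    (fun i _ => ht.mem_toFinset.mpr (hct i)) hinj.injOn

theorem not_exists_biLipschitz_of_equilateral {α E : Type*} [PseudoMetricSpace α]
    [NormedAddCommGroup E] [NormedSpace ℝ E] [ProperSpace E]
    (hα : ∀ k, ∃ (x : Fin k → α) (r : ℝ), 0 < r ∧ ∀ i j, i ≠ j → dist (x i) (x j) = r) :
    ¬ ∃ (φ : α → E) (K : ℝ), 0 < K ∧ ∀ S S' : α,
      (1 / K) * dist S S' ≤ ‖φ S - φ S'‖ ∧ ‖φ S - φ S'‖ ≤ K * dist S S' := by
  rintro ⟨φ, K, hK, hφ⟩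
  obtain ⟨M, hM⟩ := (isCompact_closedBall (0 : E) K).totallyBounded.exists_card_le_of_separated
    (one_div_pos.mpr hK)
  obtain ⟨x, r, hr, hx⟩ := hα (M + 1)
  set y : Fin (M + 1) → E := fun i => r⁻¹ • (φ (x i) - φ (x 0))
  have hy : ∀ i j, ‖y i - y j‖ = r⁻¹ * ‖φ (x i) - φ (x j)‖ := fun i j => by
    rw [← smul_sub, sub_sub_sub_cancel_right, norm_smul, Real.norm_of_nonneg (by positivity)]
  have hball : ∀ i, y i ∈ Metric.closedBall 0 K := fun i => by
    rw [mem_closedBall_zero_iff, ← sub_zero (y i), show (0 : E) = y 0 by simp [y], hy]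
    rcases eq_or_ne i 0 with rfl | hi
    · simpa using hK.le
    · calc r⁻¹ * ‖φ (x i) - φ (x 0)‖ ≤ r⁻¹ * (K * r) := by
            gcongr; simpa [hx i 0 hi] using (hφ (x i) (x 0)).2
        _ = K := by field_simp
  have hsep : ∀ i j, i ≠ j → 1 / K ≤ dist (y i) (y j) := fun i j hij => by
    rw [dist_eq_norm, hy]
    calc 1 / K = r⁻¹ * (1 / K * r) := by field_simp
      _ ≤ r⁻¹ * ‖φ (x i) - φ (x j)‖ := by
            gcongr; simpa [hx i j hij] using (hφ (x i) (x j)).1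
  exact absurd (hM (M + 1) y hball hsep) (by omega)

namespace GraphTrees

variable {n : ℕ}

theorem wlen_mul_le (g h : FreeGroup (Fin n)) : wlen (g * h) ≤ wlen g + wlen h :=
  FreeGroup.norm_mul_le g h

theorem isPref_self (g : FreeGroup (Fin n)) : IsPref g g := by
  simp [IsPref, wlen]

theorem IsPref.wlen_le {h g : FreeGroup (Fin n)} (hp : IsPref h g) : wlen h ≤ wlen g := by
  unfold IsPref at hp
  omega

theorem IsPref.trans {k h g : FreeGroup (Fin n)} (hkh : IsPref k h) (hhg : IsPref h g) :
    IsPref k g := by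
  unfold IsPref at *
  have h₁ := wlen_mul_le (k⁻¹ * h) (h⁻¹ * g)
  have h₂ := wlen_mul_le k (k⁻¹ * g)
  simp only [mul_assoc, mul_inv_cancel_left] at h₁ h₂
  omega

theorem IsPref.toWord_prefix {h g : FreeGroup (Fin n)} (hp : IsPref h g) :
    h.toWord <+: g.toWord := by
  have hsub := FreeGroup.toWord_mul_sublist h (h⁻¹ * g)
  rw [mul_inv_cancel_left] at hsub
  exact ⟨_, (hsub.eq_of_length (by simpa [wlen] using hp.symm)).symm⟩

def twoLetterWord (A B : Fin n) (j s : ℕ) : FreeGroup (Fin n) :=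
  FreeGroup.of A ^ j * FreeGroup.of B ^ s

theorem toWord_twoLetterWord (A B : Fin n) (j s : ℕ) :
    (twoLetterWord A B j s).toWord = List.replicate j (A, true) ++ List.replicate s (B, true) := by
  -- a word without inverse letters is reduced
  have hred : FreeGroup.IsReduced (List.replicate j (A, true) ++ List.replicate s (B, true)) :=
    List.Pairwise.isChain <| List.pairwise_of_forall_mem_list fun a ha b hb _ => by
      simp only [List.mem_append, List.mem_replicate] at ha hb
      grind
  rw [twoLetterWord, FreeGroup.toWord_mul, FreeGroup.toWord_of_pow, FreeGroup.toWord_of_pow,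
    hred.reduce_eq]

theorem wlen_twoLetterWord (A B : Fin n) (j s : ℕ) : wlen (twoLetterWord A B j s) = j + s := by
  simp [wlen, toWord_twoLetterWord]

theorem not_isPref_twoLetterWord {A B : Fin n} (hAB : A ≠ B) {m i j s : ℕ} (hj : j ≤ m)
    (hij : i ≠ j) : ¬ IsPref (twoLetterWord A B j (m + 1 - j)) (twoLetterWord A B i s) := by
  intro hp
  -- the prefix of length `m + 1` of `a^i b^s` contains `min i (m + 1)` letters `a`, not `j`
  have hcount := congrArg (List.count (A, true)) (List.prefix_iff_eq_take.mp hp.toWord_prefix)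
  simp only [toWord_twoLetterWord, List.count_append, List.count_replicate_self,
    List.count_replicate, beq_iff_eq, Prod.mk.injEq, hAB.symm, and_true, ↓reduceIte, add_zero,
    List.length_append, List.length_replicate, List.take_append, List.take_replicate] at hcount
  omega

theorem dist_eq_exp_of_ball_eq_of_ball_ne {S S' : X n} {m : ℕ} (h : ball S m = ball S' m)
    (h' : ball S (m + 1) ≠ ball S' (m + 1)) : dist S S' = Real.exp (-m) := by
  have hne : S ≠ S' := by
    rintro rfl
    exact h' rfl
  have hmax : IsGreatest (agreeSet S S') m := by
    refine ⟨h, fun k hk => ?_⟩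
    by_contra! hmk
    exact h' (ball_mono_eq hmk hk)
  rw [dist_eq_tdist, tdist_eq_of_ne hne, hmax.csSup_eq]

def ballWithRay (A B : Fin n) (m j : ℕ) : Set (FreeGroup (Fin n)) :=
  {g | wlen g ≤ m} ∪ {h | ∃ s, IsPref h (twoLetterWord A B j s)}

theorem isTree_ballWithRay (A B : Fin n) (m j : ℕ) : IsTree (ballWithRay A B m j) := by
  refine ⟨Or.inl (by simp [wlen]), ?_, ?_⟩
  · refine Set.infinite_of_injective_forall_mem (f := twoLetterWord A B j) ?_
      fun s => Or.inr ⟨s, isPref_self _⟩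
    intro s s' h
    simpa [wlen_twoLetterWord] using congrArg wlen h
  · rintro g (hg | ⟨s, hgs⟩) h hp
    · exact Or.inl (hp.wlen_le.trans hg)
    · exact Or.inr ⟨s, hp.trans hgs⟩

def ballWithRayTree (A B : Fin n) (m j : ℕ) : X n :=
  ⟨ballWithRay A B m j, isTree_ballWithRay A B m j⟩

theorem ball_ballWithRayTree_of_le (A B : Fin n) (j : ℕ) {m k : ℕ} (hk : k ≤ m) :
    ball (ballWithRayTree A B m j) k = {g | wlen g ≤ k} :=
  Set.ext fun _ => ⟨fun hg => hg.2, fun hg => ⟨Or.inl (hg.trans hk), hg⟩⟩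

theorem twoLetterWord_mem_ball_ballWithRayTree (A B : Fin n) {m j : ℕ} (hj : j ≤ m) :
    twoLetterWord A B j (m + 1 - j) ∈ ball (ballWithRayTree A B m j) (m + 1) :=
  ⟨Or.inr ⟨_, isPref_self _⟩, by rw [wlen_twoLetterWord]; omega⟩

theorem twoLetterWord_notMem_ballWithRay {A B : Fin n} (hAB : A ≠ B) {m i j : ℕ} (hj : j ≤ m)
    (hij : i ≠ j) : twoLetterWord A B j (m + 1 - j) ∉ ballWithRay A B m i := by
  rintro (hlen | ⟨s, hp⟩)
  · simp only [Set.mem_ofPred_eq, wlen_twoLetterWord] at hlen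
    omega
  · exact not_isPref_twoLetterWord hAB hj hij hp

theorem dist_ballWithRayTree {A B : Fin n} (hAB : A ≠ B) {m i j : ℕ} (hj : j ≤ m)
    (hij : i ≠ j) :
    dist (ballWithRayTree A B m i) (ballWithRayTree A B m j) = Real.exp (-m) := by
  refine dist_eq_exp_of_ball_eq_of_ball_ne (by simp only [ball_ballWithRayTree_of_le, le_rfl])
    fun h => twoLetterWord_notMem_ballWithRay hAB hj hij ?_
  exact (h ▸ twoLetterWord_mem_ball_ballWithRayTree A B hj).1

theorem exists_equilateral (hn : 2 ≤ n) (k : ℕ) :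
    ∃ (x : Fin k → X n) (r : ℝ), 0 < r ∧ ∀ i j, i ≠ j → dist (x i) (x j) = r :=
  ⟨fun i => ballWithRayTree ⟨0, by omega⟩ ⟨1, by omega⟩ k i, Real.exp (-k), Real.exp_pos _,
    fun i j hij => dist_ballWithRayTree (by simp) j.2.le (Fin.val_ne_of_ne hij)⟩

/-- For every `n ≥ 2` and every `N`, there is no bi-Lipschitz map from `(X_n, d_n)`
into the Euclidean space `ℝ^N`. -/
theorem no_biLipschitz_into_euclidean (n : ℕ) (hn : 2 ≤ n) (N : ℕ) :
    ¬ ∃ (φ : X n → EuclideanSpace ℝ (Fin N)) (K : ℝ), 0 < K ∧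
      ∀ S S' : X n,
        (1 / K) * dist S S' ≤ ‖φ S - φ S'‖ ∧ ‖φ S - φ S'‖ ≤ K * dist S S' :=
  not_exists_biLipschitz_of_equilateral (exists_equilateral hn)

end GraphTrees
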